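/- arXiv:1601.07856 — 5 statements merged into one kernel-verified Lean document; each statement's English description precedes it below -/
import Mathlib

section
/- Let H be a finite simple graph, n ≥ 3 odd, q ≥ 1, and let g : M_q(C_n) → H be a graph homomorphism. Then the map f : ZMod n → V(H) defined by f(i) = g((i,0)) is a graph homomorphism from C_n to H and satisfies σ₁(f) = 1 in 𝒢₁(H). -/
/-- The type of arcs of a simple graph: ordered pairs of adjacent vertices. -/
abbrev Arc {V : Type} (H : SimpleGraph V) : Type := {p : V × V // H.Adj p.1 p.2}

/-- The relators `(a,b)(c,b)⁻¹(c,d)(a,d)⁻¹` over all 4-cycles `(a,b,c,d)` of `H`. -/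
def relators1 {V : Type} (H : SimpleGraph V) : Set (FreeGroup (Arc H)) :=
  {r | ∃ (a b c d : V) (hab : H.Adj a b) (hcb : H.Adj c b) (hcd : H.Adj c d) (had : H.Adj a d),
    r = FreeGroup.of ⟨(a, b), hab⟩ * (FreeGroup.of ⟨(c, b), hcb⟩)⁻¹ *
        FreeGroup.of ⟨(c, d), hcd⟩ * (FreeGroup.of ⟨(a, d), had⟩)⁻¹}

/-- The group `𝒢₁(H)`, presented by the arcs with the 4-cycle relators. -/
abbrev G1 {V : Type} (H : SimpleGraph V) := PresentedGroup (relators1 H)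

/-- `f : ZMod n → V` is a homomorphism from the cycle `C_n` to `H`. -/
def IsCycleHom {V : Type} (H : SimpleGraph V) (n : ℕ) (f : ZMod n → V) : Prop :=
  ∀ i : ZMod n, H.Adj (f i) (f (i + 1))

/-- The signature `σ₁(f) = ∏_{i=0}^{n-1} (f(2i),f(2i+1))·(f(2i+2),f(2i+1))⁻¹ ∈ 𝒢₁(H)`,
the product being taken from left to right. -/
def sig1 {V : Type} (H : SimpleGraph V) (n : ℕ) (f : ZMod n → V) (hf : IsCycleHom H n f) :
    G1 H :=
  ((List.range n).map (fun k =>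
    PresentedGroup.of (rels := relators1 H)
        ⟨(f (2 * (k : ZMod n)), f (2 * (k : ZMod n) + 1)), hf _⟩ *
    (PresentedGroup.of (rels := relators1 H)
        ⟨(f (2 * (k : ZMod n) + 1 + 1), f (2 * (k : ZMod n) + 1)), (hf _).symm⟩)⁻¹)).prod

/-- The cycle graph on `ZMod n` (`i` adjacent to `i ± 1`). -/
def cyc (n : ℕ) : SimpleGraph (ZMod n) := SimpleGraph.fromRel (fun i j => j = i + 1)

/-- Adjacency for the generalized Mycielskian. -/
def mycAdj {W : Type} (G : SimpleGraph W) (q : ℕ) :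
    (W × Fin q) ⊕ Unit → (W × Fin q) ⊕ Unit → Prop
  | Sum.inl (u, i), Sum.inl (v, j) =>
      G.Adj u v ∧ ((i : ℕ) + 1 = (j : ℕ) ∨ (j : ℕ) + 1 = (i : ℕ) ∨ ((i : ℕ) = 0 ∧ (j : ℕ) = 0))
  | Sum.inl (u, i), Sum.inr _ => (i : ℕ) = q - 1 ∧ ∃ v, G.Adj u v
  | Sum.inr _, Sum.inl (u, i) => (i : ℕ) = q - 1 ∧ ∃ v, G.Adj u v
  | Sum.inr _, Sum.inr _ => False

/-- The generalized Mycielskian `M_q(G)`: levels `0,…,q-1` of `G` plus an apex `*`. -/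
def Myc {W : Type} (G : SimpleGraph W) (q : ℕ) : SimpleGraph ((W × Fin q) ⊕ Unit) where
  Adj := mycAdj G q
  symm := by
    constructor
    rintro (⟨u, i⟩ | ⟨⟩) (⟨v, j⟩ | ⟨⟩) h <;> simp only [mycAdj] at h ⊢
    · exact ⟨h.1.symm, by tauto⟩
    · exact h
    · exact h
  loopless := by
    constructor
    rintro (⟨u, i⟩ | ⟨⟩) h <;> simp only [mycAdj] at h
    exact G.irrefl h.1

/-!
A homomorphism `g : M_q(C_n) → H` provides layers `L₀, …, L_{q-1} : ZMod n → V(H)` and an apex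
`z` with the crossed edges `L₀(i) ~ L₀(i ± 1)`, `L_j(i) ~ L_{j+1}(i ± 1)` and `L_{q-1}(i) ~ z`.
For `u, v : ZMod n → V(H)` put `τ(u, v) = ∏ᵢ (u(2i), v(2i+1)) · (u(2i+2), v(2i+1))⁻¹`, so that
`σ₁(f) = τ(L₀, L₀)`. The 4-cycle relators let one replace `v` by any layer crossed with `u`
without changing `τ`, and, after a cyclic shift of the product, replace `u` by any layer crossed
with `v` up to conjugacy. Climbing the layers this way reaches a pair containing the constant
layer `z`, whose `τ` telescopes to `1`.
-/

section CycProd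

variable {G : Type*} [Group G] {n : ℕ}

def cycProd (t : ZMod n → G) : G :=
  ((List.range n).map fun k : ℕ => t k).prod

lemma mul_prod_range_shift (X Y : ℕ → G) (m : ℕ) :
    X 0 * ((List.range m).map fun k => Y k * X (k + 1)).prod
      = ((List.range m).map fun k => X k * Y k).prod * X m := by
  induction m with
  | zero => simp
  | succ m ih =>
    simp only [List.range_succ, List.map_append, List.prod_append, List.map_cons, List.map_nil,
      List.prod_cons, List.prod_nil, mul_one, ← mul_assoc, ih]

lemma isConj_cycProd_shift (X Y : ZMod n → G) :
    IsConj (cycProd fun i => X i * Y i) (cycProd fun i => Y i * X (i + 1)) := by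
  have h := mul_prod_range_shift (fun k : ℕ => X k) (fun k : ℕ => Y k) n
  simp only [Nat.cast_add, Nat.cast_one, ZMod.natCast_self, Nat.cast_zero] at h
  exact isConj_iff.mpr ⟨(X 0)⁻¹, by rw [cycProd, cycProd, eq_inv_mul_of_mul_eq h]; group⟩

lemma cycProd_mul_inv_succ (c : ZMod n → G) :
    cycProd (fun i => c i * (c (i + 1))⁻¹) = 1 := by
  have h := List.prod_range_div' n fun k : ℕ => c k
  simp only [div_eq_mul_inv, Nat.cast_add, Nat.cast_one, Nat.cast_zero, ZMod.natCast_self,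
    mul_inv_cancel] at h
  exact h

lemma cycProd_one : cycProd (fun _ : ZMod n => (1 : G)) = 1 := by
  simp [cycProd]

end CycProd

section Arcs

variable {V : Type} (H : SimpleGraph V)

noncomputable def G1.arc (a b : V) : G1 H :=
  open Classical in
  if h : H.Adj a b then PresentedGroup.of ⟨(a, b), h⟩ else 1

variable {H}

lemma G1.arc_of_adj {a b : V} (h : H.Adj a b) : G1.arc H a b = PresentedGroup.of ⟨(a, b), h⟩ :=
  dif_pos h

lemma G1.arc_square {a b c d : V}
    (hab : H.Adj a b) (hcb : H.Adj c b) (hcd : H.Adj c d) (had : H.Adj a d) :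
    G1.arc H a b * (G1.arc H c b)⁻¹ * G1.arc H c d * (G1.arc H a d)⁻¹ = 1 := by
  rw [G1.arc_of_adj hab, G1.arc_of_adj hcb, G1.arc_of_adj hcd, G1.arc_of_adj had]
  simp only [PresentedGroup.of, ← map_inv, ← map_mul]
  exact (QuotientGroup.eq_one_iff _).mpr
    (Subgroup.subset_normalClosure ⟨a, b, c, d, hab, hcb, hcd, had, rfl⟩)

lemma G1.arc_mul_inv_eq {a b c d : V}
    (hab : H.Adj a b) (hcb : H.Adj c b) (hcd : H.Adj c d) (had : H.Adj a d) :
    G1.arc H a b * (G1.arc H c b)⁻¹ = G1.arc H a d * (G1.arc H c d)⁻¹ := by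
  rw [← mul_inv_eq_one.mp (G1.arc_square hab hcb hcd had)]
  group

lemma G1.inv_arc_mul_eq {a b c d : V}
    (hab : H.Adj a b) (hcb : H.Adj c b) (hcd : H.Adj c d) (had : H.Adj a d) :
    (G1.arc H c b)⁻¹ * G1.arc H c d = (G1.arc H a b)⁻¹ * G1.arc H a d := by
  rw [← mul_inv_eq_one.mp (G1.arc_square hab hcb hcd had)]
  group

end Arcs

section Zigzag

variable {V : Type} {H : SimpleGraph V} {n : ℕ}

variable (H) in
def CrossAdj (u v : ZMod n → V) : Prop :=
  ∀ i, H.Adj (u i) (v (i + 1)) ∧ H.Adj (u (i + 1)) (v i)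

lemma CrossAdj.isCycleHom {f : ZMod n → V} (h : CrossAdj H f f) : IsCycleHom H n f :=
  fun i => (h i).1

lemma CrossAdj.symm {u v : ZMod n → V} (h : CrossAdj H u v) : CrossAdj H v u :=
  fun i => ⟨(h i).2.symm, (h i).1.symm⟩

variable (H) in
noncomputable def zigzagSig (u v : ZMod n → V) : G1 H :=
  cycProd fun i =>
    G1.arc H (u (2 * i)) (v (2 * i + 1)) * (G1.arc H (u (2 * i + 1 + 1)) (v (2 * i + 1)))⁻¹

lemma sig1_eq_zigzagSig (f : ZMod n → V) (hf : IsCycleHom H n f) :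
    sig1 H n f hf = zigzagSig H f f := by
  have hcast : (do let k ← List.range n; pure (k : ZMod n) : List (ZMod n))
      = (List.range n).map (↑) := List.flatMap_pure_eq_map _ _
  rw [sig1, hcast, List.map_map]
  refine congrArg List.prod (List.map_congr_left fun k _ => ?_)
  dsimp only [Function.comp_apply]
  rw [G1.arc_of_adj (hf _), G1.arc_of_adj (hf _).symm]

lemma zigzagSig_congr_right {u v v' : ZMod n → V}
    (hv : CrossAdj H u v) (hv' : CrossAdj H u v') :
    zigzagSig H u v = zigzagSig H u v' := by
  refine congrArg List.prod (List.map_congr_left fun k _ => ?_)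
  exact G1.arc_mul_inv_eq (hv _).1 (hv _).2 (hv' _).2 (hv' _).1

lemma isConj_zigzagSig_left {u u' v : ZMod n → V}
    (hu : CrossAdj H u v) (hu' : CrossAdj H u' v) :
    IsConj (zigzagSig H u v) (zigzagSig H u' v) := by
  have hshift (w : ZMod n → V) := isConj_cycProd_shift (G := G1 H)
    (fun i => G1.arc H (w (2 * i)) (v (2 * i + 1)))
    (fun i => (G1.arc H (w (2 * i + 1 + 1)) (v (2 * i + 1)))⁻¹)
  have hmid : (fun i => (G1.arc H (u (2 * i + 1 + 1)) (v (2 * i + 1)))⁻¹ *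
        G1.arc H (u (2 * (i + 1))) (v (2 * (i + 1) + 1)))
      = fun i => (G1.arc H (u' (2 * i + 1 + 1)) (v (2 * i + 1)))⁻¹ *
        G1.arc H (u' (2 * (i + 1))) (v (2 * (i + 1) + 1)) := by
    funext i
    rw [show 2 * (i + 1) = 2 * i + 1 + 1 by ring]
    exact G1.inv_arc_mul_eq (hu' _).2 (hu _).2 (hu _).1 (hu' _).1
  exact ((hshift u).trans (hmid ▸ IsConj.refl _)).trans (hshift u').symm

lemma zigzagSig_const_right (u : ZMod n → V) (z : V) : zigzagSig H u (fun _ => z) = 1 := by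
  have h := cycProd_mul_inv_succ fun i => G1.arc H (u (2 * i)) z
  simp only [show ∀ i : ZMod n, 2 * (i + 1) = 2 * i + 1 + 1 from fun i => by ring] at h
  exact h

lemma zigzagSig_const_left (z : V) (v : ZMod n → V) : zigzagSig H (fun _ => z) v = 1 := by
  simp only [zigzagSig, mul_inv_cancel]
  exact cycProd_one

lemma zigzagSig_eq_one_of_chain {L : ℕ → ZMod n → V} {m : ℕ}
    (hL : ∀ j < m, CrossAdj H (L j) (L (j + 1))) {z : V} (hz : L m = fun _ => z)
    {j : ℕ} (hj : j ≤ m) {v : ZMod n → V} (hv : CrossAdj H (L j) v) :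
    zigzagSig H (L j) v = 1 ∧ zigzagSig H v (L j) = 1 := by
  induction hj using Nat.decreasingInduction generalizing v with
  | self => rw [hz]; exact ⟨zigzagSig_const_left z v, zigzagSig_const_right v z⟩
  | of_succ j hj ih =>
    obtain ⟨hup, hdown⟩ := ih (hL j hj).symm
    constructor
    · rw [zigzagSig_congr_right hv (hL j hj), hdown]
    · exact isConj_one_left.mp (hup ▸ isConj_zigzagSig_left hv.symm (hL j hj).symm)

end Zigzag

section Mycielskian

variable {V : Type} {H : SimpleGraph V} {n q : ℕ}

lemma cyc_adj_add_one (hn : n ≠ 1) (i : ZMod n) : (cyc n).Adj i (i + 1) := by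
  have := ZMod.nontrivial_iff.mpr hn
  exact (SimpleGraph.fromRel_adj _ _ _).mpr ⟨(succ_ne_self i).symm, Or.inl rfl⟩

/-- The apex serves as the constant level `q`. -/
def mycLevel (g : Myc (cyc n) q →g H) (j : ℕ) (i : ZMod n) : V :=
  if h : j < q then g (Sum.inl (i, ⟨j, h⟩)) else g (Sum.inr ())

variable (g : Myc (cyc n) q →g H)

lemma mycLevel_of_lt {j : ℕ} (hj : j < q) :
    mycLevel g j = fun i => g (Sum.inl (i, ⟨j, hj⟩)) :=
  funext fun _ => dif_pos hj

lemma mycLevel_self : mycLevel g q = fun _ => g (Sum.inr ()) :=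
  funext fun _ => dif_neg (lt_irrefl q)

lemma crossAdj_mycLevel_zero (hn : n ≠ 1) (hq : 0 < q) :
    CrossAdj H (mycLevel g 0) (mycLevel g 0) := by
  rw [mycLevel_of_lt g hq]
  exact fun i => ⟨g.map_adj ⟨cyc_adj_add_one hn i, Or.inr (Or.inr ⟨rfl, rfl⟩)⟩,
    g.map_adj ⟨(cyc_adj_add_one hn i).symm, Or.inr (Or.inr ⟨rfl, rfl⟩)⟩⟩

lemma crossAdj_mycLevel_succ (hn : n ≠ 1) {j : ℕ} (hj : j < q) :
    CrossAdj H (mycLevel g j) (mycLevel g (j + 1)) := by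
  rw [mycLevel_of_lt g hj]
  by_cases hj' : j + 1 < q
  · rw [mycLevel_of_lt g hj']
    exact fun i => ⟨g.map_adj ⟨cyc_adj_add_one hn i, Or.inl rfl⟩,
      g.map_adj ⟨(cyc_adj_add_one hn i).symm, Or.inl rfl⟩⟩
  · obtain rfl : q = j + 1 := by omega
    rw [mycLevel_self]
    exact fun i => ⟨g.map_adj ⟨rfl, i + 1, cyc_adj_add_one hn i⟩,
      g.map_adj ⟨rfl, i + 1 + 1, cyc_adj_add_one hn (i + 1)⟩⟩

end Mycielskian

theorem base_of_mycielski_hom_has_trivial_sig1_general {V : Type} (H : SimpleGraph V)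
    (n q : ℕ) (h3 : 3 ≤ n) (hq : 1 ≤ q) (g : Myc (cyc n) q →g H) :
    ∃ hf : IsCycleHom H n (fun i : ZMod n => g (Sum.inl (i, ⟨0, hq⟩))),
      sig1 H n (fun i : ZMod n => g (Sum.inl (i, ⟨0, hq⟩))) hf = 1 := by
  have hn : n ≠ 1 := by omega
  have hbase := crossAdj_mycLevel_zero g hn hq
  have hchain := zigzagSig_eq_one_of_chain (fun _ => crossAdj_mycLevel_succ g hn)
    (mycLevel_self g) (Nat.zero_le q) hbase
  rw [mycLevel_of_lt g hq] at hbase hchain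
  exact ⟨hbase.isCycleHom, (sig1_eq_zigzagSig _ _).trans hchain.1⟩

/-- If `g : M_q(C_n) → H` is a homomorphism (`n ≥ 3` odd, `q ≥ 1`), then
`f(i) = g((i,0))` is a homomorphism `C_n → H` with `σ₁(f) = 1` in `𝒢₁(H)`. -/
theorem base_of_mycielski_hom_has_trivial_sig1 {V : Type} [Fintype V] (H : SimpleGraph V)
    (n q : ℕ) (hodd : Odd n) (h3 : 3 ≤ n) (hq : 1 ≤ q) (g : Myc (cyc n) q →g H) :
    ∃ hf : IsCycleHom H n (fun i : ZMod n => g (Sum.inl (i, ⟨0, hq⟩))),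
      sig1 H n (fun i : ZMod n => g (Sum.inl (i, ⟨0, hq⟩))) hf = 1 :=
  base_of_mycielski_hom_has_trivial_sig1_general H n q h3 hq g
end

section
/- Let H be a finite simple graph, i ≥ 0 and j ≥ 1. (i) If h : B_s(2i,1) → H is a graph homomorphism, then the map ĥ defined by ĥ(x,y) = h(x, y mod 2) is a graph homomorphism from B_s(2i,j) to H. (ii) If h : B_s(2i,1) → H is a graph homomorphism, then the map ĥ' defined by ĥ'(x,y) = h(x, 1 − (y mod 2)) is a graph homomorphism from B_d(2i,j) to H. -/
/-! Folding the columns of a brick by `y ↦ y mod 2` (or `y ↦ 1 - y mod 2` on `B_d`) lands in the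
strip `B_s(a,1)` and keeps vertical neighbours vertical neighbours, so it is a homomorphism;
`ĥ` and `ĥ'` are `h` composed with these folds. -/

/-- Vertices of the brick `B_s(i,j)`: points of `ℤ²` in the box with equal parities. -/
abbrev BsVerts (i j : ℤ) : Type :=
  {p : ℤ × ℤ // 0 ≤ p.1 ∧ p.1 ≤ i ∧ 0 ≤ p.2 ∧ p.2 ≤ j ∧ p.1 % 2 = p.2 % 2}

/-- Vertices of the brick `B_d(i,j)`: points of `ℤ²` in the box with different parities. -/
abbrev BdVerts (i j : ℤ) : Type :=
  {p : ℤ × ℤ // 0 ≤ p.1 ∧ p.1 ≤ i ∧ 0 ≤ p.2 ∧ p.2 ≤ j ∧ p.1 % 2 ≠ p.2 % 2}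

/-- The brick `B_s(i,j)`; edges join points at distance 1 in both coordinates. -/
def Bs (i j : ℤ) : SimpleGraph (BsVerts i j) where
  Adj u v := |u.val.1 - v.val.1| = 1 ∧ |u.val.2 - v.val.2| = 1
  symm := by
    constructor
    intro u v h
    exact ⟨by rw [abs_sub_comm]; exact h.1, by rw [abs_sub_comm]; exact h.2⟩
  loopless := by constructor; intro u h; simp at h

/-- The brick `B_d(i,j)`; edges join points at distance 1 in both coordinates. -/
def Bd (i j : ℤ) : SimpleGraph (BdVerts i j) where
  Adj u v := |u.val.1 - v.val.1| = 1 ∧ |u.val.2 - v.val.2| = 1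
  symm := by
    constructor
    intro u v h
    exact ⟨by rw [abs_sub_comm]; exact h.1, by rw [abs_sub_comm]; exact h.2⟩
  loopless := by constructor; intro u h; simp at h

theorem Int.abs_emod_two_sub_emod_two_eq_one {y y' : ℤ} (h : |y - y'| = 1) : |y % 2 - y' % 2| = 1 := by
  rw [abs_eq zero_le_one] at h ⊢
  omega

def Bs.fold (a b : ℤ) : Bs a b →g Bs a 1 where
  toFun u := ⟨(u.val.1, u.val.2 % 2), by have := u.2; omega⟩
  map_rel' := fun ⟨hx, hy⟩ => ⟨hx, Int.abs_emod_two_sub_emod_two_eq_one hy⟩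

def Bd.fold (a b : ℤ) : Bd a b →g Bs a 1 where
  toFun u := ⟨(u.val.1, 1 - u.val.2 % 2), by have := u.2; omega⟩
  map_rel' := fun ⟨hx, hy⟩ => ⟨hx, by
    rw [sub_sub_sub_cancel_left, abs_sub_comm]
    exact Int.abs_emod_two_sub_emod_two_eq_one hy⟩

/-- (i) `ĥ(x,y) = h(x, y mod 2)` is a homomorphism `B_s(2i,j) → H`;
(ii) `ĥ'(x,y) = h(x, 1 - (y mod 2))` is a homomorphism `B_d(2i,j) → H`. -/
theorem brick_periodic_extension {V : Type} (H : SimpleGraph V)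
    (i j : ℕ) (h : Bs (2 * (i : ℤ)) 1 →g H) :
    (∀ u v : BsVerts (2 * (i : ℤ)) (j : ℤ), (Bs (2 * (i : ℤ)) (j : ℤ)).Adj u v →
      H.Adj (h ⟨(u.val.1, u.val.2 % 2), by have := u.2; omega⟩)
            (h ⟨(v.val.1, v.val.2 % 2), by have := v.2; omega⟩)) ∧
    (∀ u v : BdVerts (2 * (i : ℤ)) (j : ℤ), (Bd (2 * (i : ℤ)) (j : ℤ)).Adj u v →
      H.Adj (h ⟨(u.val.1, 1 - u.val.2 % 2), by have := u.2; omega⟩)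
            (h ⟨(v.val.1, 1 - v.val.2 % 2), by have := v.2; omega⟩)) :=
  ⟨fun _ _ huv => (h.comp (Bs.fold _ _)).map_adj huv,
    fun _ _ huv => (h.comp (Bd.fold _ _)).map_adj huv⟩
end

section
/- Let i ≥ 1 and j ≥ 1. For any two vertices (x,y) and (x',y') of B_s(2i,j), the graph distance between (x,y) and (x',y') in B_s(2i,j) equals max(|x − x'|, |y − y'|). -/
/- Each edge changes both coordinates by exactly 1, so no walk is shorter than the Chebyshev
distance. Conversely, a walk of any length `n` that is at least the Chebyshev distance and has
the same parity exists: step each coordinate towards its target, and once it has arrived,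
oscillate around it, which the box permits as soon as it has width and height at least 1. -/

theorem Int.exists_abs_sub_eq_one_abs_sub_le_pred {a x x' d : ℤ} (ha : 1 ≤ a)
    (hx : 0 ≤ x ∧ x ≤ a) (hx' : 0 ≤ x' ∧ x' ≤ a) (hd : 0 < d) (hxd : |x - x'| ≤ d)
    (hpar : (x - x') % 2 = d % 2) :
    ∃ y, |x - y| = 1 ∧ (0 ≤ y ∧ y ≤ a) ∧ |y - x'| ≤ d - 1 := by
  rw [abs_le] at hxd
  rcases lt_trichotomy x x' with hlt | rfl | hgt
  · exact ⟨x + 1, by simp, by omega, abs_le.2 (by omega)⟩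
  · rcases lt_or_ge x a with hxa | hxa
    · exact ⟨x + 1, by simp, by omega, abs_le.2 (by omega)⟩
    · exact ⟨x - 1, by simp, by omega, abs_le.2 (by omega)⟩
  · exact ⟨x - 1, by simp, by omega, abs_le.2 (by omega)⟩

namespace Bs

variable {a b : ℤ}

theorem max_abs_sub_le_length {u v : BsVerts a b} (p : (Bs a b).Walk u v) :
    max |u.val.1 - v.val.1| |u.val.2 - v.val.2| ≤ p.length := by
  induction p with
  | nil => simp
  | @cons u w v huw p ih =>
    rw [max_le_iff] at ih ⊢
    rw [SimpleGraph.Walk.length_cons, Nat.cast_succ]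
    exact ⟨(abs_sub_le _ w.val.1 _).trans (by linarith [huw.1]),
      (abs_sub_le _ w.val.2 _).trans (by linarith [huw.2])⟩

theorem exists_walk_length_eq (ha : 1 ≤ a) (hb : 1 ≤ b) (n : ℕ) (u v : BsVerts a b)
    (h1 : |u.val.1 - v.val.1| ≤ n) (h2 : |u.val.2 - v.val.2| ≤ n)
    (hpar : (u.val.1 - v.val.1) % 2 = n % 2) :
    ∃ p : (Bs a b).Walk u v, p.length = n := by
  induction n generalizing u with
  | zero =>
    obtain rfl : u = v := by
      rw [Nat.cast_zero, abs_nonpos_iff, sub_eq_zero] at h1 h2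
      exact Subtype.ext (Prod.ext h1 h2)
    exact ⟨.nil, rfl⟩
  | succ n ih =>
    obtain ⟨⟨x, y⟩, hx0, hxa, hy0, hyb, hxy⟩ := u
    obtain ⟨⟨x', y'⟩, hx'0, hx'a, hy'0, hy'b, hxy'⟩ := v
    push_cast at h1 h2 hpar
    obtain ⟨x₁, hxx₁, hx₁, hx₁x'⟩ := Int.exists_abs_sub_eq_one_abs_sub_le_pred ha
      ⟨hx0, hxa⟩ ⟨hx'0, hx'a⟩ (by omega) h1 hpar
    -- both coordinate differences have the parity of `n + 1`, since `x ≡ y` and `x' ≡ y'`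
    obtain ⟨y₁, hyy₁, hy₁, hy₁y'⟩ := Int.exists_abs_sub_eq_one_abs_sub_le_pred hb
      ⟨hy0, hyb⟩ ⟨hy'0, hy'b⟩ (by omega) h2 (by omega)
    have hxy₁ : x₁ % 2 = y₁ % 2 := by
      rw [abs_eq zero_le_one] at hxx₁ hyy₁
      omega
    let w : BsVerts a b := ⟨(x₁, y₁), hx₁.1, hx₁.2, hy₁.1, hy₁.2, hxy₁⟩
    obtain ⟨p, hp⟩ := ih w (by simpa [w] using hx₁x') (by simpa [w] using hy₁y')
      (by rw [abs_eq zero_le_one] at hxx₁; simp only [w]; omega)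
    exact ⟨.cons (show (Bs a b).Adj _ w from ⟨hxx₁, hyy₁⟩) p, by simp [hp]⟩

theorem dist_eq_max (ha : 1 ≤ a) (hb : 1 ≤ b) (u v : BsVerts a b) :
    ((Bs a b).dist u v : ℤ) = max |u.val.1 - v.val.1| |u.val.2 - v.val.2| := by
  obtain ⟨n, hn⟩ := Int.eq_ofNat_of_zero_le ((abs_nonneg _).trans (le_max_left _ _) :
    0 ≤ max |u.val.1 - v.val.1| |u.val.2 - v.val.2|)
  have hpar : (u.val.1 - v.val.1) % 2 = (n : ℤ) % 2 := by
    have hu : u.val.1 % 2 = u.val.2 % 2 := u.2.2.2.2.2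
    have hv : v.val.1 % 2 = v.val.2 % 2 := v.2.2.2.2.2
    simp only [← hn, abs_eq_max_neg]
    omega
  obtain ⟨p, hp⟩ := exists_walk_length_eq ha hb n u v (hn ▸ le_max_left _ _)
    (hn ▸ le_max_right _ _) hpar
  obtain ⟨q, hq⟩ := SimpleGraph.Reachable.exists_walk_length_eq_dist ⟨p⟩
  have hlower := max_abs_sub_le_length q
  have hupper := SimpleGraph.dist_le p
  omega

end Bs

/-- In `B_s(2i,j)` (`i,j ≥ 1`), the graph distance between `(x,y)` and
`(x',y')` is `max |x−x'| |y−y'|`. -/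
theorem brick_dist_eq_max (i j : ℕ) (hi : 1 ≤ i) (hj : 1 ≤ j)
    (u v : BsVerts (2 * (i : ℤ)) (j : ℤ)) :
    ((Bs (2 * (i : ℤ)) (j : ℤ)).dist u v : ℤ)
      = max |u.val.1 - v.val.1| |u.val.2 - v.val.2| :=
  Bs.dist_eq_max (by omega) (by exact_mod_cast hj) u v
end

section
/- If Q is a finite dismantlable poset, then its barycentric subdivision S(Q) is dismantlable; consequently S^m(Q) is dismantlable for every m ≥ 0. -/
/-- The barycentric subdivision of a poset: nonempty chains, ordered by inclusion. -/
def Sd (α : Type) [PartialOrder α] : Type :=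
  {C : Set α // C.Nonempty ∧ IsChain (· ≤ ·) C}

instance {α : Type} [PartialOrder α] : PartialOrder (Sd α) :=
  inferInstanceAs (PartialOrder {C : Set α // C.Nonempty ∧ IsChain (· ≤ ·) C})

instance {α : Type} [PartialOrder α] [Finite α] : Finite (Sd α) :=
  inferInstanceAs (Finite {C : Set α // C.Nonempty ∧ IsChain (· ≤ ·) C})

/-- `p` is dominated by `q` within the subposet `S`. -/
def DomIn {α : Type} [PartialOrder α] (S : Set α) (p q : α) : Prop :=
  p ∈ S ∧ q ∈ S ∧ p ≠ q ∧ (p ≤ q ∨ q ≤ p) ∧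
    ∀ x ∈ S, x ≠ p → x ≠ q → (x < p → x < q) ∧ (p < x → q < x)

/-- `Reduces S T`: the subposet `S` can be reduced to the subposet `T` by successively
deleting dominated elements. -/
inductive Reduces {α : Type} [PartialOrder α] : Set α → Set α → Prop
  | refl (S : Set α) : Reduces S S
  | step {S T : Set α} (p q : α) (h : DomIn S p q) (hr : Reduces (S \ {p}) T) : Reduces S T

/-- A poset is dismantlable if it reduces to a one-element subposet by successively
deleting dominated elements. -/
def Dismantlable (α : Type) [PartialOrder α] : Prop :=
  ∃ x : α, Reduces (Set.univ : Set α) {x}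

/-- A bundled finite poset. -/
structure FinPoset where
  carrier : Type
  [po : PartialOrder carrier]
  [fin : Finite carrier]

attribute [instance] FinPoset.po FinPoset.fin

/-- Barycentric subdivision of a bundled finite poset. -/
def FinPoset.sd (P : FinPoset) : FinPoset :=
  { carrier := Sd P.carrier }

/-!
Deleting an element `p` dominated by `q` from a poset `S` can be mirrored in the poset of
chains: first the chains through `p` that miss `q` are deleted, largest first, each being
dominated by the chain obtained by adding `q`; then the chains through both `p` and `q` are
deleted, smallest first, each being dominated by the chain obtained by removing `p`. What is
left are the chains of `S \ {p}`. A dismantling of `Q` down to `{x}` thus becomes a dismantling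
of `S(Q)` down to the single chain `{x}`.
-/

section Dismantling

variable {β : Type} [PartialOrder β]

theorem Reduces.trans {S T U : Set β} (h₁ : Reduces S T) (h₂ : Reduces T U) : Reduces S U := by
  induction h₁ with
  | refl => exact h₂
  | step p q h _ ih => exact .step p q h (ih h₂)

theorem DomIn.mono {S T : Set β} {p q : β} (h : DomIn T p q) (hST : S ⊆ T) (hp : p ∈ S)
    (hq : q ∈ S) : DomIn S p q :=
  ⟨hp, hq, h.2.2.1, h.2.2.2.1, fun x hx => h.2.2.2.2 x (hST hx)⟩

theorem DomIn.comparable {S : Set β} {p q x : β} (h : DomIn S p q) (hx : x ∈ S)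
    (hxp : x ≤ p ∨ p ≤ x) : x ≤ q ∨ q ≤ x := by
  obtain ⟨-, -, -, hpq, hdom⟩ := h
  by_cases hxq : x = q
  · exact .inl hxq.le
  by_cases hx' : x = p
  · subst hx'
    exact hpq
  rcases hxp with hxp | hpx
  · exact .inl ((hdom x hx hx' hxq).1 (hxp.lt_of_ne hx')).le
  · exact .inr ((hdom x hx hx' hxq).2 (hpx.lt_of_ne' hx')).le

/-- `r X C` means that `X` has to be deleted before `C`. -/
theorem Reduces.sdiff_of_forall_domIn [Finite β] {r : β → β → Prop} (hr : WellFounded r)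
    {S A : Set β} (h : ∀ C ∈ S ∩ A, ∃ D ∈ S \ A, DomIn (S \ {X ∈ A | r X C}) C D) :
    Reduces S (S \ A) := by
  suffices ∀ B ⊆ A, Reduces (S \ (A \ B)) (S \ A) by simpa using this A subset_rfl
  intro B
  induction B using WellFoundedLT.induction with
  | _ B ih =>
  intro hBA
  rcases (S ∩ B).eq_empty_or_nonempty with hSB | hSB
  · have hrest : S \ (A \ B) = S \ A := by
      ext X
      have := Set.eq_empty_iff_forall_notMem.mp hSB X
      simp only [Set.mem_sdiff, Set.mem_inter_iff] at this ⊢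
      tauto
    exact hrest ▸ .refl _
  obtain ⟨C, ⟨hCS, hCB⟩, hCmin⟩ := hr.has_min _ hSB
  obtain ⟨D, ⟨hDS, hDA⟩, hCD⟩ := h C ⟨hCS, hBA hCB⟩
  have hsub : S \ (A \ B) ⊆ S \ {X ∈ A | r X C} :=
    fun X ⟨hXS, hX⟩ => ⟨hXS, fun ⟨hXA, hXC⟩ => hX ⟨hXA, fun hXB => hCmin X ⟨hXS, hXB⟩ hXC⟩⟩
  have hdom : DomIn (S \ (A \ B)) C D :=
    hCD.mono hsub ⟨hCS, fun hC => hC.2 hCB⟩ ⟨hDS, fun hD => hDA hD.1⟩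
  have hrest : (S \ (A \ B)) \ {C} = S \ (A \ (B \ {C})) := by
    ext X
    by_cases hXC : X = C
    · subst hXC
      simp [hBA hCB]
    · simp [hXC]
  refine .step C D hdom ?_
  rw [hrest]
  exact ih _ (Set.sdiff_singleton_ssubset.mpr hCB) (Set.sdiff_subset.trans hBA)

end Dismantling

namespace Sd

variable {α : Type} [PartialOrder α]

/-- The subdivision of the subposet `S`, as a subposet of `Sd α`. -/
def chainsIn (S : Set α) : Set (Sd α) :=
  {C | C.1 ⊆ S}

def chainsThrough (p : α) : Set (Sd α) :=
  {C | p ∈ C.1}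

variable [Finite α] {S : Set α} {p q : α}

theorem reduces_chainsIn_sdiff_chainsThrough_sdiff (hpq : DomIn S p q) :
    Reduces (chainsIn S) (chainsIn S \ (chainsThrough p \ chainsThrough q)) := by
  refine Reduces.sdiff_of_forall_domIn wellFounded_gt fun C ⟨hCS, hpC, hqC⟩ => ?_
  let D : Sd α := ⟨insert q C.1, Set.insert_nonempty _ _, C.2.2.insert fun b hb _ =>
    (hpq.comparable (hCS hb) (C.2.2.total hb hpC)).symm⟩
  have hqD : q ∈ D.1 := Set.mem_insert q C.1
  have hCD : C < D := lt_of_le_of_ne (Set.subset_insert q C.1) fun h => hqC (h ▸ hqD)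
  refine ⟨D, ⟨Set.insert_subset hpq.2.1 hCS, fun h => h.2 hqD⟩,
    ⟨⟨hCS, fun h => lt_irrefl C h.2⟩, ⟨Set.insert_subset hpq.2.1 hCS, fun h => h.1.2 hqD⟩,
      hCD.ne, .inl hCD.le, fun X ⟨hXS, hX⟩ _ hXD => ⟨fun hXC => hXC.trans hCD, fun hCX => ?_⟩⟩⟩
  have hqX : q ∈ X.1 := by
    by_contra hqX
    exact hX ⟨⟨hCX.le hpC, hqX⟩, hCX⟩
  exact lt_of_le_of_ne (Set.insert_subset hqX hCX.le) (Ne.symm hXD)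

theorem reduces_sdiff_chainsThrough_inter (hpq : DomIn S p q) :
    Reduces (chainsIn S \ (chainsThrough p \ chainsThrough q))
      ((chainsIn S \ (chainsThrough p \ chainsThrough q)) \
        (chainsThrough p ∩ chainsThrough q)) := by
  refine Reduces.sdiff_of_forall_domIn wellFounded_lt fun C ⟨hCS, hpC, hqC⟩ => ?_
  let D : Sd α := ⟨C.1 \ {p}, ⟨q, hqC, hpq.2.2.1.symm⟩, C.2.2.mono Set.sdiff_subset⟩
  have hpD : p ∉ D.1 := fun h => h.2 rfl
  have hDC : D < C := lt_of_le_of_ne Set.sdiff_subset fun h => hpD (h ▸ hpC)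
  have hDS : D ∈ chainsIn S \ (chainsThrough p \ chainsThrough q) :=
    ⟨Set.sdiff_subset.trans hCS.1, fun h => hpD h.1⟩
  refine ⟨D, ⟨hDS, fun h => hpD h.1⟩,
    ⟨⟨hCS, fun h => lt_irrefl C h.2⟩, ⟨hDS, fun h => hpD h.1.1⟩,
      hDC.ne', .inr hDC.le, fun X ⟨⟨_, hXA⟩, hX⟩ _ hXD => ⟨fun hXC => ?_, hDC.trans⟩⟩⟩
  have hpX : p ∉ X.1 := fun hpX => by
    by_cases hqX : q ∈ X.1
    · exact hX ⟨⟨hpX, hqX⟩, hXC⟩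
    · exact hXA ⟨hpX, hqX⟩
  exact lt_of_le_of_ne (fun x hx => ⟨hXC.le hx, fun hxp => hpX (hxp ▸ hx)⟩) hXD

theorem reduces_chainsIn_sdiff_singleton (hpq : DomIn S p q) :
    Reduces (chainsIn S) (chainsIn (S \ {p})) := by
  have hrest : (chainsIn S \ (chainsThrough p \ chainsThrough q)) \
      (chainsThrough p ∩ chainsThrough q) = chainsIn (S \ {p}) := by
    ext C
    simp only [chainsIn, chainsThrough, Set.mem_sdiff, Set.mem_inter_iff, Set.mem_ofPred_eq,
      Set.subset_sdiff, Set.disjoint_singleton_right]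
    tauto
  rw [← hrest]
  exact (reduces_chainsIn_sdiff_chainsThrough_sdiff hpq).trans
    (reduces_sdiff_chainsThrough_inter hpq)

theorem _root_.Reduces.chainsIn {S T : Set α} (h : Reduces S T) :
    Reduces (chainsIn S) (chainsIn T) := by
  induction h with
  | refl => exact .refl _
  | step p q hpq _ ih => exact (reduces_chainsIn_sdiff_singleton hpq).trans ih

end Sd

theorem Dismantlable.sd {α : Type} [PartialOrder α] [Finite α] (h : Dismantlable α) :
    Dismantlable (Sd α) := by
  obtain ⟨x, hx⟩ := h
  let c : Sd α := ⟨{x}, Set.singleton_nonempty x, Set.subsingleton_singleton.isChain⟩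
  have huniv : Sd.chainsIn (Set.univ : Set α) = Set.univ := by
    simp [Sd.chainsIn]
  have hsingleton : Sd.chainsIn ({x} : Set α) = {c} := by
    ext C
    refine ⟨fun hC => Subtype.ext (C.2.1.subset_singleton_iff.mp hC), ?_⟩
    rintro rfl
    exact subset_rfl (a := ({x} : Set α))
  refine ⟨c, ?_⟩
  rw [← huniv, ← hsingleton]
  exact hx.chainsIn

/-- If `Q` is a finite dismantlable poset, then `S(Q)` is dismantlable;
consequently `S^m(Q)` is dismantlable for every `m ≥ 0`. -/
theorem subdivision_dismantlable (Q : FinPoset) (hQ : Dismantlable Q.carrier) :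
    Dismantlable (Q.sd).carrier ∧ ∀ m : ℕ, Dismantlable ((FinPoset.sd^[m]) Q).carrier := by
  refine ⟨hQ.sd, fun m => ?_⟩
  induction m with
  | zero => exact hQ
  | succ n ih =>
    rw [Function.iterate_succ_apply']
    exact ih.sd
end

section
/- Let Q be a finite poset and suppose p ∈ Q is dominated by q ∈ Q. Then the barycentric subdivision S(Q) can be reduced, by successively deleting dominated elements, to its subposet S(Q ∖ {p}) consisting of the nonempty chains of Q that do not contain p. -/
section Aux
set_option linter.unusedSectionVars false

variable {Q : Type} [PartialOrder Q] [Finite Q]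

theorem Reduces.trans_s13 {α : Type} [PartialOrder α] {S T V : Set α}
    (h1 : Reduces S T) (h2 : Reduces T V) : Reduces S V := by
  induction h1 with
  | refl => exact h2
  | step p q hd hr ih => exact Reduces.step p q hd (ih h2)

omit [Finite Q] in
theorem sd_le_iff (C D : Sd Q) : C ≤ D ↔ C.val ⊆ D.val := Iff.rfl

omit [Finite Q] in
theorem sd_lt_iff (C D : Sd Q) : C < D ↔ C.val ⊂ D.val := by
  constructor
  · intro h
    exact lt_iff_le_and_ne.mpr ⟨h.le, fun e => h.ne (Subtype.ext e)⟩
  · intro h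
    exact lt_iff_le_and_ne.mpr ⟨h.subset, fun e => h.ne (congrArg Subtype.val e)⟩

variable {p q : Q} (h : DomIn (Set.univ : Set Q) p q)
include h

/-- anything comparable to `p` is comparable to `q` -/
theorem comp_q (x : Q) (hx : x ≤ p ∨ p ≤ x) : x ≤ q ∨ q ≤ x := by
  rcases eq_or_ne x p with rfl | hxp
  · exact h.2.2.2.1
  rcases eq_or_ne x q with rfl | hxq
  · exact Or.inl le_rfl
  rcases hx with hx | hx
  · exact Or.inl ((h.2.2.2.2 x trivial hxp hxq).1 (lt_of_le_of_ne hx hxp)).le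
  · exact Or.inr ((h.2.2.2.2 x trivial hxp hxq).2 (lt_of_le_of_ne hx (Ne.symm hxp))).le

/-- Insert `q` into a chain containing `p`. -/
theorem insert_q_chain (C : Sd Q) (hC : p ∈ C.val) :
    (insert q C.val).Nonempty ∧ IsChain (· ≤ ·) (insert q C.val) := by
  refine ⟨Set.insert_nonempty _ _, C.2.2.insert ?_⟩
  intro a ha hne
  have hap : a ≤ p ∨ p ≤ a := by
    rcases eq_or_ne a p with rfl | hap
    · exact Or.inl le_rfl
    · exact (C.2.2 ha hC hap).imp id id
  rcases comp_q h a hap with h1 | h1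
  · exact Or.inr h1
  · exact Or.inl h1

/-- Phase 1: remove chains containing `p` but not `q`, largest first. -/
theorem phase1 : ∀ n (U : Set (Sd Q)),
    {C : Sd Q | q ∈ C.val ∨ p ∉ C.val} ⊆ U →
    ({C : Sd Q | C ∈ U ∧ p ∈ C.val ∧ q ∉ C.val}).ncard = n →
    Reduces U {C : Sd Q | q ∈ C.val ∨ p ∉ C.val} := by
  intro n
  induction n using Nat.strong_induction_on with
  | _ n ih =>
    intro U hinv hcard
    set A : Set (Sd Q) := {C : Sd Q | C ∈ U ∧ p ∈ C.val ∧ q ∉ C.val} with hA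
    rcases eq_or_ne n 0 with rfl | hn
    · -- A is empty, U equals the target
      have hAe : A = ∅ := by
        by_contra hne
        have : A.Nonempty := Set.nonempty_iff_ne_empty.mpr hne
        have := Set.ncard_pos (Set.toFinite A) |>.mpr this
        omega
      have : U = {C : Sd Q | q ∈ C.val ∨ p ∉ C.val} := by
        apply Set.Subset.antisymm _ hinv
        intro C hCU
        by_contra hc
        simp only [Set.mem_setOf_eq, not_or, not_not] at hc
        have : C ∈ A := ⟨hCU, hc.2, hc.1⟩
        rw [hAe] at this
        exact this
      rw [this]
      exact Reduces.refl _
    · -- pick a maximal-cardinality element of A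
      have hAne : A.Nonempty := by
        rw [Set.nonempty_iff_ne_empty]
        intro he
        rw [he, Set.ncard_empty] at hcard
        omega
      obtain ⟨C, hCA, hCmax⟩ :=
        Set.exists_max_image A (fun D => D.val.ncard) (Set.toFinite A) hAne
      set D : Sd Q := ⟨insert q C.val, insert_q_chain h C hCA.2.1⟩ with hD
      have hCD : C < D := by
        rw [sd_lt_iff]
        exact Set.ssubset_insert hCA.2.2
      have hDU : D ∈ U := hinv (Or.inl (Set.mem_insert q _))
      have hdom : DomIn U C D := by
        refine ⟨hCA.1, hDU, hCD.ne, Or.inl hCD.le, ?_⟩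
        intro E hEU hEC hED
        constructor
        · intro hlt
          exact lt_trans hlt hCD
        · intro hlt
          -- C < E, need D < E, i.e. q ∈ E.val
          rw [sd_lt_iff] at hlt ⊢
          have hqE : q ∈ E.val := by
            by_contra hqE
            have hpE : p ∈ E.val := hlt.subset hCA.2.1
            have hEA : E ∈ A := ⟨hEU, hpE, hqE⟩
            have h1 : E.val.ncard ≤ C.val.ncard := hCmax E hEA
            have h2 : C.val.ncard < E.val.ncard :=
              Set.ncard_lt_ncard hlt (Set.toFinite _)
            omega
          refine ⟨Set.insert_subset hqE hlt.subset, ?_⟩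
          intro hsub
          exact hED (Subtype.ext (Set.Subset.antisymm hsub (Set.insert_subset hqE hlt.subset)))
      -- now remove C
      refine Reduces.step C D hdom ?_
      have hinv' : {C : Sd Q | q ∈ C.val ∨ p ∉ C.val} ⊆ U \ {C} := by
        intro E hE
        refine ⟨hinv hE, ?_⟩
        intro he
        rw [Set.mem_singleton_iff] at he
        subst he
        rcases hE with h1 | h1
        · exact hCA.2.2 h1
        · exact h1 hCA.2.1
      have hcard' : {E : Sd Q | E ∈ U \ {C} ∧ p ∈ E.val ∧ q ∉ E.val}.ncard < n := by
        have hsub : {E : Sd Q | E ∈ U \ {C} ∧ p ∈ E.val ∧ q ∉ E.val} ⊂ A := by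
          constructor
          · intro E hE; exact ⟨hE.1.1, hE.2⟩
          · intro hsub
            have := hsub hCA
            exact this.1.2 rfl
        calc {E : Sd Q | E ∈ U \ {C} ∧ p ∈ E.val ∧ q ∉ E.val}.ncard
            < A.ncard := Set.ncard_lt_ncard hsub (Set.toFinite _)
          _ = n := hcard
      exact ih _ hcard' (U \ {C}) hinv' rfl

/-- Phase 2: remove chains containing both `p` and `q`, smallest first. -/
theorem phase2 : ∀ n (U : Set (Sd Q)),
    {C : Sd Q | p ∉ C.val} ⊆ U →
    U ⊆ {C : Sd Q | q ∈ C.val ∨ p ∉ C.val} →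
    ({C : Sd Q | C ∈ U ∧ p ∈ C.val}).ncard = n →
    Reduces U {C : Sd Q | p ∉ C.val} := by
  intro n
  induction n using Nat.strong_induction_on with
  | _ n ih =>
    intro U hinv hsup hcard
    set A : Set (Sd Q) := {C : Sd Q | C ∈ U ∧ p ∈ C.val} with hA
    rcases eq_or_ne n 0 with rfl | hn
    · have hAe : A = ∅ := by
        by_contra hne
        have : A.Nonempty := Set.nonempty_iff_ne_empty.mpr hne
        have := Set.ncard_pos (Set.toFinite A) |>.mpr this
        omega
      have : U = {C : Sd Q | p ∉ C.val} := by
        apply Set.Subset.antisymm _ hinv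
        intro C hCU
        by_contra hc
        simp only [Set.mem_setOf_eq, not_not] at hc
        have : C ∈ A := ⟨hCU, hc⟩
        rw [hAe] at this
        exact this
      rw [this]
      exact Reduces.refl _
    · have hAne : A.Nonempty := by
        rw [Set.nonempty_iff_ne_empty]
        intro he
        rw [he, Set.ncard_empty] at hcard
        omega
      obtain ⟨C, hCA, hCmin⟩ :=
        Set.exists_min_image A (fun D => D.val.ncard) (Set.toFinite A) hAne
      have hqC : q ∈ C.val := by
        rcases hsup hCA.1 with h1 | h1
        · exact h1
        · exact absurd hCA.2 h1
      have hDprop : (C.val \ {p}).Nonempty ∧ IsChain (· ≤ ·) (C.val \ {p}) :=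
        ⟨⟨q, hqC, fun e => h.2.2.1 (Set.mem_singleton_iff.mp e).symm⟩,
          C.2.2.mono Set.diff_subset⟩
      set D : Sd Q := ⟨C.val \ {p}, hDprop⟩ with hD
      have hDC : D < C := by
        rw [sd_lt_iff]
        exact ⟨Set.diff_subset, fun hsub =>
          (hsub hCA.2).2 rfl⟩
      have hDU : D ∈ U := hinv (fun hp => hp.2 rfl)
      have hdom : DomIn U C D := by
        refine ⟨hCA.1, hDU, hDC.ne', Or.inr hDC.le, ?_⟩
        intro E hEU hEC hED
        constructor
        · intro hlt
          -- E < C: show E < D, i.e. p ∉ E.val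
          rw [sd_lt_iff] at hlt ⊢
          have hpE : p ∉ E.val := by
            intro hpE
            have hEA : E ∈ A := ⟨hEU, hpE⟩
            have h1 : C.val.ncard ≤ E.val.ncard := hCmin E hEA
            have h2 : E.val.ncard < C.val.ncard :=
              Set.ncard_lt_ncard hlt (Set.toFinite _)
            omega
          have hsub : E.val ⊆ C.val \ {p} :=
            Set.subset_diff_singleton hlt.subset hpE
          refine ⟨hsub, fun hsub2 => hED (Subtype.ext (Set.Subset.antisymm hsub hsub2))⟩
        · intro hlt
          exact lt_trans hDC hlt
      refine Reduces.step C D hdom ?_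
      have hinv' : {C : Sd Q | p ∉ C.val} ⊆ U \ {C} := by
        intro E hE
        exact ⟨hinv hE, fun he => hE (by rw [Set.mem_singleton_iff] at he; rw [he]; exact hCA.2)⟩
      have hcard' : {E : Sd Q | E ∈ U \ {C} ∧ p ∈ E.val}.ncard < n := by
        have hsub : {E : Sd Q | E ∈ U \ {C} ∧ p ∈ E.val} ⊂ A := by
          constructor
          · intro E hE; exact ⟨hE.1.1, hE.2⟩
          · intro hsub
            exact (hsub hCA).1.2 rfl
        calc {E : Sd Q | E ∈ U \ {C} ∧ p ∈ E.val}.ncard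
            < A.ncard := Set.ncard_lt_ncard hsub (Set.toFinite _)
          _ = n := hcard
      exact ih _ hcard' (U \ {C}) hinv'
        (fun E hE => hsup hE.1) rfl

end Aux

/-- If `p` is dominated by `q` in a finite poset `Q`, then the barycentric
subdivision `S(Q)` reduces, by successively deleting dominated elements, to the subposet
`S(Q \ {p})` of chains not containing `p`. -/


theorem subdivision_reduces_of_dominated (Q : Type) [PartialOrder Q] [Finite Q]
    (p q : Q) (h : DomIn (Set.univ : Set Q) p q) :
    Reduces (Set.univ : Set (Sd Q)) {C : Sd Q | p ∉ C.val} := by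
  have h1 : Reduces (Set.univ : Set (Sd Q)) {C : Sd Q | q ∈ C.val ∨ p ∉ C.val} :=
    phase1 h _ Set.univ (Set.subset_univ _) rfl
  have h2 : Reduces {C : Sd Q | q ∈ C.val ∨ p ∉ C.val} {C : Sd Q | p ∉ C.val} :=
    phase2 h _ _ (fun C hC => Or.inr hC) (fun C hC => hC) rfl
  exact h1.trans_s13 h2
end
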